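/- Let M ≥ 1, N ≥ 1, 1 ≤ R ≤ min(M, N), σ_e² > 0, σ_ε² > 0, λ_1 ≥ … ≥ λ_R > 0 and ỹ ∈ ℝ^M. Suppose ν* ∈ (−λ_R²/(2σ_e²), M/2] satisfies g(ν*) = 0, and additionally ν* ≥ 0 if R < N. Define z* = 1/(Σ_{j=1}^R σ_e² ỹ_j² λ_j²/(λ_j² + 2ν*σ_e²)² + σ_ε²), w*_j = ỹ_j² λ_j² z*/(λ_j² + 2ν*σ_e²)² for 1 ≤ j ≤ R, and w*_i = 0 for R+1 ≤ i ≤ N. Then (w*, z*) is feasible and minimizes F(w, z) = Σ_{j=1}^R (1/2)(ỹ_j² z + λ_j² w_j − 2|ỹ_j| λ_j √(w_j z)) + (1/2)(Σ_{m=R+1}^M ỹ_m²) z − (M/2) log z over the feasible set D = {(w, z) ∈ ℝ^N × ℝ : w_j ≥ 0 for all j, z > 0, σ_e² Σ_{j=1}^N w_j + σ_ε² z = 1}. -/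

import Mathlib

/-- The lifted maximum-likelihood objective
`F(w, z) = ∑_{j=1}^R (1/2)(ỹ_j² z + λ_j² w_j − 2|ỹ_j| λ_j √(w_j z))
          + (1/2)(∑_{m=R+1}^M ỹ_m²) z − (M/2) log z`. -/
noncomputable def liftedObj (M N R : ℕ) (hRM : R ≤ M) (hRN : R ≤ N)
    (lam : Fin R → ℝ) (y : Fin M → ℝ) (p : (Fin N → ℝ) × ℝ) : ℝ :=
  (∑ j : Fin R, (1/2) * ((y (Fin.castLE hRM j)) ^ 2 * p.2
      + (lam j) ^ 2 * p.1 (Fin.castLE hRN j)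
      - 2 * |y (Fin.castLE hRM j)| * lam j * Real.sqrt (p.1 (Fin.castLE hRN j) * p.2)))
    + (1/2) * (∑ m ∈ Finset.univ.filter (fun m : Fin M => R ≤ (m : ℕ)), (y m) ^ 2) * p.2
    - ((M : ℝ)/2) * Real.log p.2

/-- The feasible set
`D = {(w, z) : w_j ≥ 0 for all j, z > 0, σ_e² ∑_{j=1}^N w_j + σ_ε² z = 1}`. -/
def feasSet (N : ℕ) (se seps : ℝ) : Set ((Fin N → ℝ) × ℝ) :=
  {p | (∀ j, 0 ≤ p.1 j) ∧ 0 < p.2 ∧ se * (∑ j : Fin N, p.1 j) + seps * p.2 = 1}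

/-- The scalar dual function `g`. -/
noncomputable def gFun (M R : ℕ) (hRM : R ≤ M) (se seps : ℝ)
    (lam : Fin R → ℝ) (y : Fin M → ℝ) (ν : ℝ) : ℝ :=
  (∑ j : Fin R, (y (Fin.castLE hRM j)) ^ 2 * ν * se / ((lam j) ^ 2 + 2 * ν * se))
    + (1/2) * (∑ m ∈ Finset.univ.filter (fun m : Fin M => R ≤ (m : ℕ)), (y m) ^ 2)
    - ((M : ℝ)/2) * ((∑ j : Fin R, se * (y (Fin.castLE hRM j)) ^ 2 * (lam j) ^ 2
        / ((lam j) ^ 2 + 2 * ν * se) ^ 2) + seps)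
    + ν * seps

/-!
Weak duality with the multiplier `ν*` of the linear constraint. On the feasible set `F` equals
its Lagrangian, and completing the square in each `√w_j` rewrites the Lagrangian as
`A z - (M/2) log z - ν*` (with `A = lagrangianSlope`) plus a sum of squares plus
`ν* σ_e² ∑_{i > R} w_i`, all nonnegative (`λ_j² + 2ν*σ_e² > 0` by the range of `ν*`, and the
tail is empty or `ν* ≥ 0`). At `(w*, z*)` the squares and the tail vanish, and `g(ν*) = 0` is
precisely `A z* = M/2`, so `z*` minimises the convex function `A z - (M/2) log z`.
-/

open Finset

lemma sum_eq_sum_castLE_add_sum_filter_le {M : Type*} [AddCommMonoid M] {R N : ℕ} (h : R ≤ N)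
    (v : Fin N → M) :
    ∑ i, v i = ∑ j : Fin R, v (Fin.castLE h j)
      + ∑ i ∈ univ.filter (fun i : Fin N => R ≤ (i : ℕ)), v i := by
  have hhead : univ.filter (fun i : Fin N => (i : ℕ) < R) = univ.map (Fin.castLEEmb h) := by
    ext i
    simp only [mem_filter, mem_univ, true_and, mem_map, Fin.castLEEmb_apply]
    exact ⟨fun hi => ⟨⟨i, hi⟩, rfl⟩, fun ⟨j, hj⟩ => hj ▸ j.isLt⟩
  rw [← sum_filter_add_sum_filter_not univ (fun i : Fin N => (i : ℕ) < R), hhead, sum_map]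
  simp only [not_lt, Fin.castLEEmb_apply]

lemma fit_add_mul_eq {a l k w z : ℝ} (hc : l ^ 2 + 2 * k ≠ 0) (hw : 0 ≤ w) (hz : 0 ≤ z) :
    1 / 2 * (a ^ 2 * z + l ^ 2 * w - 2 * |a| * l * √(w * z)) + k * w
      = a ^ 2 * k * z / (l ^ 2 + 2 * k)
        + ((l ^ 2 + 2 * k) * √w - |a| * l * √z) ^ 2 / (2 * (l ^ 2 + 2 * k)) := by
  rw [Real.sqrt_mul hw, ← Real.sq_sqrt hw, ← Real.sq_sqrt hz]
  field_simp
  rw [Real.sqrt_sq (Real.sqrt_nonneg _), Real.sqrt_sq (Real.sqrt_nonneg _)]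
  ring_nf
  rw [sq_abs]
  ring

lemma sq_add_two_mul_mul_pos {l₀ l se ν : ℝ} (hse : 0 < se) (hl₀ : 0 ≤ l₀) (hl : l₀ ≤ l)
    (hν : -l₀ ^ 2 / (2 * se) < ν) : 0 < l ^ 2 + 2 * ν * se := by
  rw [div_lt_iff₀ (by positivity)] at hν
  nlinarith

lemma mul_sub_mul_log_le_of_mul_eq {a b z₀ z : ℝ} (hb : 0 ≤ b) (hz₀ : 0 < z₀) (hz : 0 < z)
    (h : a * z₀ = b) : a * z₀ - b * Real.log z₀ ≤ a * z - b * Real.log z := by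
  have hlog : Real.log z - Real.log z₀ ≤ z / z₀ - 1 := by
    rw [← Real.log_div hz.ne' hz₀.ne']
    exact Real.log_le_sub_one_of_pos (by positivity)
  have hline : b * (z / z₀ - 1) = a * z - a * z₀ := by
    rw [← h]
    field_simp
  linarith [mul_le_mul_of_nonneg_left hlog hb]

lemma mul_sqrt_sq_mul_div_sq {a l c z : ℝ} (hl : 0 ≤ l) (hc : 0 < c) :
    c * √(a ^ 2 * l ^ 2 * z / c ^ 2) = |a| * l * √z := by
  have hsq : a ^ 2 * l ^ 2 * z / c ^ 2 = (|a| * l / c) ^ 2 * z := by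
    rw [div_pow, mul_pow, sq_abs]
    ring
  rw [hsq, Real.sqrt_mul (sq_nonneg _), Real.sqrt_sq (by positivity)]
  field_simp

section Lagrangian

variable {M N R : ℕ} (hRM : R ≤ M) (hRN : R ≤ N) (se seps ν : ℝ) (lam : Fin R → ℝ)
  (y : Fin M → ℝ)

noncomputable def lagrangianSlope : ℝ :=
  (∑ j : Fin R, (y (Fin.castLE hRM j)) ^ 2 * ν * se / ((lam j) ^ 2 + 2 * ν * se))
    + (1/2) * (∑ m ∈ univ.filter (fun m : Fin M => R ≤ (m : ℕ)), (y m) ^ 2) + ν * seps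

lemma gFun_eq_lagrangianSlope_sub :
    gFun M R hRM se seps lam y ν = lagrangianSlope hRM se seps ν lam y
      - (M / 2) * ((∑ j : Fin R, se * (y (Fin.castLE hRM j)) ^ 2 * (lam j) ^ 2
        / ((lam j) ^ 2 + 2 * ν * se) ^ 2) + seps) := by
  rw [gFun, lagrangianSlope]
  ring

variable {se seps ν lam}

lemma liftedObj_eq_of_mem_feasSet (hc : ∀ j, (lam j) ^ 2 + 2 * ν * se ≠ 0)
    {p : (Fin N → ℝ) × ℝ} (hp : p ∈ feasSet N se seps) :
    liftedObj M N R hRM hRN lam y p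
      = lagrangianSlope hRM se seps ν lam y * p.2 - (M / 2) * Real.log p.2 - ν
        + ∑ j : Fin R, (((lam j) ^ 2 + 2 * ν * se) * √(p.1 (Fin.castLE hRN j))
            - |y (Fin.castLE hRM j)| * lam j * √p.2) ^ 2 / (2 * ((lam j) ^ 2 + 2 * ν * se))
        + ν * se * ∑ i ∈ univ.filter (fun i : Fin N => R ≤ (i : ℕ)), p.1 i := by
  obtain ⟨hw, hz, hsum⟩ := hp
  rw [sum_eq_sum_castLE_add_sum_filter_le hRN] at hsum
  have hterm : ∀ j : Fin R, 1 / 2 * ((y (Fin.castLE hRM j)) ^ 2 * p.2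
      + (lam j) ^ 2 * p.1 (Fin.castLE hRN j)
      - 2 * |y (Fin.castLE hRM j)| * lam j * √(p.1 (Fin.castLE hRN j) * p.2))
      = (y (Fin.castLE hRM j)) ^ 2 * ν * se / ((lam j) ^ 2 + 2 * ν * se) * p.2
        + (((lam j) ^ 2 + 2 * ν * se) * √(p.1 (Fin.castLE hRN j))
            - |y (Fin.castLE hRM j)| * lam j * √p.2) ^ 2 / (2 * ((lam j) ^ 2 + 2 * ν * se))
        - ν * se * p.1 (Fin.castLE hRN j) := by
    intro j
    have hc' : (lam j) ^ 2 + 2 * (ν * se) ≠ 0 := by rw [← mul_assoc]; exact hc j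
    have := fit_add_mul_eq (a := y (Fin.castLE hRM j)) hc' (hw (Fin.castLE hRN j)) hz.le
    simp only [← mul_assoc] at this
    rw [mul_div_right_comm] at this
    linarith
  rw [liftedObj, lagrangianSlope, sum_congr rfl fun j _ => hterm j, sum_sub_distrib,
    sum_add_distrib, ← sum_mul, ← mul_sum]
  linear_combination (-ν) * hsum

lemma liftedObj_ge_of_mem_feasSet (hse : 0 ≤ se) (hc : ∀ j, 0 < (lam j) ^ 2 + 2 * ν * se)
    (hν : R < N → 0 ≤ ν) {p : (Fin N → ℝ) × ℝ} (hp : p ∈ feasSet N se seps) :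
    lagrangianSlope hRM se seps ν lam y * p.2 - (M / 2) * Real.log p.2 - ν
      ≤ liftedObj M N R hRM hRN lam y p := by
  rw [liftedObj_eq_of_mem_feasSet hRM hRN y (fun j => (hc j).ne') hp]
  have hsq : 0 ≤ ∑ j : Fin R, (((lam j) ^ 2 + 2 * ν * se) * √(p.1 (Fin.castLE hRN j))
      - |y (Fin.castLE hRM j)| * lam j * √p.2) ^ 2 / (2 * ((lam j) ^ 2 + 2 * ν * se)) :=
    sum_nonneg fun j _ => div_nonneg (sq_nonneg _) (by linarith [hc j])
  have htail : 0 ≤ ν * se * ∑ i ∈ univ.filter (fun i : Fin N => R ≤ (i : ℕ)), p.1 i := by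
    rcases hRN.lt_or_eq with hlt | rfl
    · exact mul_nonneg (mul_nonneg (hν hlt) hse) (sum_nonneg fun i _ => hp.1 i)
    · rw [filter_false_of_mem fun i _ => not_le.mpr i.isLt, sum_empty, mul_zero]
  linarith

variable {z : ℝ} {w : Fin N → ℝ}

lemma kkt_mem_feasSet (hse : 0 ≤ se) (hseps : 0 < seps)
    (hz : z = 1 / ((∑ j : Fin R, se * (y (Fin.castLE hRM j)) ^ 2 * (lam j) ^ 2
        / ((lam j) ^ 2 + 2 * ν * se) ^ 2) + seps))
    (hw : ∀ j : Fin R, w (Fin.castLE hRN j)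
      = (y (Fin.castLE hRM j)) ^ 2 * (lam j) ^ 2 * z / ((lam j) ^ 2 + 2 * ν * se) ^ 2)
    (htail : ∀ i : Fin N, R ≤ (i : ℕ) → w i = 0) :
    (w, z) ∈ feasSet N se seps := by
  set T := ∑ j : Fin R, se * (y (Fin.castLE hRM j)) ^ 2 * (lam j) ^ 2
    / ((lam j) ^ 2 + 2 * ν * se) ^ 2
  have hTz : 0 < T + seps := by positivity
  have hzpos : 0 < z := by rw [hz]; positivity
  refine ⟨fun i => ?_, hzpos, ?_⟩
  · by_cases hi : (i : ℕ) < R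
    · change 0 ≤ w i
      rw [show i = Fin.castLE hRN ⟨i, hi⟩ from rfl, hw]
      positivity
    · exact (htail i (not_lt.mp hi)).ge
  · have hsum : se * ∑ j : Fin R, w (Fin.castLE hRN j) = T * z := by
      rw [sum_congr rfl fun j _ => hw j, mul_sum, sum_mul]
      exact sum_congr rfl fun j _ => by ring
    rw [sum_eq_sum_castLE_add_sum_filter_le hRN,
      sum_eq_zero fun i hi => htail i (mem_filter.mp hi).2, add_zero, hsum, hz]
    field_simp

lemma liftedObj_kkt_eq (hlam : ∀ j, 0 ≤ lam j) (hc : ∀ j, 0 < (lam j) ^ 2 + 2 * ν * se)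
    (hw : ∀ j : Fin R, w (Fin.castLE hRN j)
      = (y (Fin.castLE hRM j)) ^ 2 * (lam j) ^ 2 * z / ((lam j) ^ 2 + 2 * ν * se) ^ 2)
    (htail : ∀ i : Fin N, R ≤ (i : ℕ) → w i = 0) (hp : (w, z) ∈ feasSet N se seps) :
    liftedObj M N R hRM hRN lam y (w, z)
      = lagrangianSlope hRM se seps ν lam y * z - (M / 2) * Real.log z - ν := by
  rw [liftedObj_eq_of_mem_feasSet hRM hRN y (fun j => (hc j).ne') hp]
  have hsq : ∀ j : Fin R, ((lam j) ^ 2 + 2 * ν * se) * √(w (Fin.castLE hRN j))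
      = |y (Fin.castLE hRM j)| * lam j * √z := fun j => by
    rw [hw j, mul_sqrt_sq_mul_div_sq (hlam j) (hc j)]
  simp only [hsq, sub_self, sum_eq_zero fun i hi => htail i (mem_filter.mp hi).2]
  simp

end Lagrangian

/-- Global optimality of the KKT point obtained from a root `ν* ∈ (−λ_R²/(2σ_e²), M/2]`
of `g` (with `ν* ≥ 0` when `R < N`): the point `(w*, z*)` with
`z* = 1/(∑_j σ_e² ỹ_j² λ_j²/(λ_j² + 2ν*σ_e²)² + σ_ε²)`,
`w*_j = ỹ_j² λ_j² z*/(λ_j² + 2ν*σ_e²)²` for `j ≤ R` and `w*_i = 0` for `i > R`,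
is feasible and minimizes the lifted objective over the feasible set. -/
theorem stmt_15 (M N R : ℕ) (hR : 1 ≤ R)
    (hRM : R ≤ M) (hRN : R ≤ N)
    (se seps : ℝ) (hse : 0 < se) (hseps : 0 < seps)
    (lam : Fin R → ℝ) (hlam : ∀ j, 0 < lam j)
    (hord : ∀ i j : Fin R, i ≤ j → lam j ≤ lam i)
    (y : Fin M → ℝ) (ν : ℝ)
    (hν : ν ∈ Set.Ioc (-(lam ⟨R - 1, by omega⟩) ^ 2 / (2 * se)) ((M : ℝ)/2))
    (hroot : gFun M R hRM se seps lam y ν = 0)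
    (hν0 : R < N → 0 ≤ ν)
    (zstar : ℝ)
    (hz : zstar = 1 / ((∑ j : Fin R, se * (y (Fin.castLE hRM j)) ^ 2 * (lam j) ^ 2
        / ((lam j) ^ 2 + 2 * ν * se) ^ 2) + seps))
    (wstar : Fin N → ℝ)
    (hwhead : ∀ (i : Fin N) (h : (i : ℕ) < R),
      wstar i = (y (Fin.castLE hRM ⟨(i : ℕ), h⟩)) ^ 2 * (lam ⟨(i : ℕ), h⟩) ^ 2 * zstar
        / ((lam ⟨(i : ℕ), h⟩) ^ 2 + 2 * ν * se) ^ 2)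
    (hwtail : ∀ i : Fin N, R ≤ (i : ℕ) → wstar i = 0) :
    (wstar, zstar) ∈ feasSet N se seps ∧
    ∀ p ∈ feasSet N se seps,
      liftedObj M N R hRM hRN lam y (wstar, zstar) ≤ liftedObj M N R hRM hRN lam y p := by
  have hc : ∀ j, 0 < (lam j) ^ 2 + 2 * ν * se := fun j =>
    sq_add_two_mul_mul_pos hse (hlam _).le
      (hord j _ (Fin.le_def.mpr (Nat.le_sub_one_of_lt j.isLt))) hν.1
  have hw : ∀ j : Fin R, wstar (Fin.castLE hRN j)
      = (y (Fin.castLE hRM j)) ^ 2 * (lam j) ^ 2 * zstar / ((lam j) ^ 2 + 2 * ν * se) ^ 2 :=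
    fun j => hwhead _ j.isLt
  have hfeas := kkt_mem_feasSet hRM hRN y hse.le hseps hz hw hwtail
  have hslope : lagrangianSlope hRM se seps ν lam y * zstar = M / 2 := by
    rw [gFun_eq_lagrangianSlope_sub, sub_eq_zero] at hroot
    rw [hroot, hz]
    field_simp
  refine ⟨hfeas, fun p hp => ?_⟩
  calc liftedObj M N R hRM hRN lam y (wstar, zstar)
      = lagrangianSlope hRM se seps ν lam y * zstar - (M / 2) * Real.log zstar - ν :=
        liftedObj_kkt_eq hRM hRN y (fun j => (hlam j).le) hc hw hwtail hfeas
    _ ≤ lagrangianSlope hRM se seps ν lam y * p.2 - (M / 2) * Real.log p.2 - ν := by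
        gcongr ?_ - ν
        exact mul_sub_mul_log_le_of_mul_eq (by positivity) hfeas.2.1 hp.2.1 hslope
    _ ≤ liftedObj M N R hRM hRN lam y p :=
        liftedObj_ge_of_mem_feasSet hRM hRN y hse.le hc hν0 hp
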